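/- Two orthonormal bases {|i⟩} and {|φ_i⟩} of H_C with U_C|i⟩ = |φ_i⟩ satisfy: the guarded composition of operator-valued functions F_1,...,F_n along {|φ_i⟩} evaluated at (δ_1,...,δ_n) equals (U_C ⊗ I_H) ∘ (guarded composition along {|i⟩} at (δ_1,...,δ_n)) ∘ (U_C† ⊗ I_H). -/

import Mathlib

noncomputable section
open scoped InnerProductSpace
open Finset

/-- Coordinate model of the tensor product `H_C ⊗ H` along a fixed orthonormal
basis of the `n`-dimensional coin space `H_C`. -/
abbrev TensorSp (n : ℕ) (H : Type*) [NormedAddCommGroup H] [InnerProductSpace ℂ H] : Type _ :=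
  PiLp 2 (fun _ : Fin n => H)

variable {n : ℕ} {H : Type*} [NormedAddCommGroup H] [InnerProductSpace ℂ H]

/-- the pure tensor `c ⊗ ψ`. -/
def pureTensor (c : EuclideanSpace ℂ (Fin n)) (ψ : H) : TensorSp n H :=
  WithLp.toLp 2 (fun i => c i • ψ)

/-- the block-diagonal operator `∑ᵢ |i⟩⟨i| ⊗ Uᵢ`, i.e. the guarded composition of
the `Uᵢ` along the computational basis of the coin space. -/
def blockDiag (U : Fin n → (H →ₗ[ℂ] H)) : TensorSp n H →ₗ[ℂ] TensorSp n H where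
  toFun x := WithLp.toLp 2 (fun i => U i (x i))
  map_add' x y := by ext i; simp
  map_smul' c x := by ext i; simp

/-- `A ⊗ B` in the coordinate model, `A` acting on the coin space. -/
def tensorOp (A : EuclideanSpace ℂ (Fin n) →ₗ[ℂ] EuclideanSpace ℂ (Fin n))
    (B : H →ₗ[ℂ] H) : TensorSp n H →ₗ[ℂ] TensorSp n H where
  toFun x := WithLp.toLp 2 (fun i => ∑ b : Fin n, A (EuclideanSpace.single b 1) i • B (x b))
  map_add' x y := by
    ext i; simp [map_add, smul_add, Finset.sum_add_distrib]
  map_smul' c x := by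
    ext i; simp [map_smul, Finset.smul_sum, smul_comm c]

/-- `A ⊗ I_H`. -/
def tensorLeft (A : EuclideanSpace ℂ (Fin n) →ₗ[ℂ] EuclideanSpace ℂ (Fin n)) :
    TensorSp n H →ₗ[ℂ] TensorSp n H :=
  tensorOp A LinearMap.id

/-- A linear operator is unitary iff it preserves inner products and is bijective. -/
def IsUnitaryOp {E : Type*} [NormedAddCommGroup E] [InnerProductSpace ℂ E]
    (A : E →ₗ[ℂ] E) : Prop :=
  (∀ x y : E, ⟪A x, A y⟫_ℂ = ⟪x, y⟫_ℂ) ∧ Function.Bijective A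

/-- Positive (semidefinite) operator. -/
def IsPosOp {E : Type*} [NormedAddCommGroup E] [InnerProductSpace ℂ E]
    (A : E →ₗ[ℂ] E) : Prop :=
  ∀ x : E, (⟪x, A x⟫_ℂ).im = 0 ∧ 0 ≤ (⟪x, A x⟫_ℂ).re

/-- Löwner order `A ⊑ B`. -/
def Loewner {E : Type*} [NormedAddCommGroup E] [InnerProductSpace ℂ E]
    (A B : E →ₗ[ℂ] E) : Prop :=
  IsPosOp (B - A)

section guarded
variable [FiniteDimensional ℂ H] {Δ : Fin n → Type*} [∀ k, Fintype (Δ k)]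

/-- the coefficients `λ_{kδ}`. -/
def lam (F : ∀ k, Δ k → (H →ₗ[ℂ] H)) (k : Fin n) (δ : Δ k) : ℝ :=
  Real.sqrt ((LinearMap.trace ℂ H (LinearMap.adjoint (F k δ) ∘ₗ F k δ)).re /
    ∑ τ : Δ k, (LinearMap.trace ℂ H (LinearMap.adjoint (F k τ) ∘ₗ F k τ)).re)

/-- the guarded composition `□ᵢ |i⟩ → Fᵢ` of operator-valued functions, evaluated at
`⊕ᵢ δᵢ`. -/
def guardedComp (F : ∀ k, Δ k → (H →ₗ[ℂ] H)) (δ : ∀ k, Δ k) :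
    TensorSp n H →ₗ[ℂ] TensorSp n H where
  toFun x := WithLp.toLp 2 (fun i => (∏ k ∈ Finset.univ.erase i, lam F k (δ k)) • F i (δ i) (x i))
  map_add' x y := by ext i; simp [map_add, smul_add]
  map_smul' c x := by
    ext i; simp [map_smul, smul_comm c]

end guarded

/-- partial trace over the coin space of an operator on `H_C ⊗ H`. -/
def coinProj (i : Fin n) : TensorSp n H →ₗ[ℂ] H where
  toFun x := x i
  map_add' _ _ := rfl
  map_smul' _ _ := rfl

def coinIncl (i : Fin n) : H →ₗ[ℂ] TensorSp n H where
  toFun ψ := WithLp.toLp 2 (Pi.single i ψ)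
  map_add' x y := by ext j; by_cases h : j = i <;> simp [h]
  map_smul' c x := by ext j; by_cases h : j = i <;> simp [h]

def trCoin (A : TensorSp n H →ₗ[ℂ] TensorSp n H) : H →ₗ[ℂ] H :=
  ∑ i : Fin n, coinProj i ∘ₗ A ∘ₗ coinIncl i

/-- the outer product `|x⟩⟨y|`. -/
def outer {E : Type*} [NormedAddCommGroup E] [InnerProductSpace ℂ E]
    (x y : E) : E →ₗ[ℂ] E :=
  ((innerSL ℂ y).toLinearMap).smulRight x

/-
The operators agree on the product vectors `|φᵢ⟩ ⊗ ψ`, which span `H_C ⊗ H` because the `|φᵢ⟩`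
form a basis; on such a vector `U_C† ⊗ I` gives `|i⟩ ⊗ ψ`, the composition along `{|i⟩}` scales it
to `λ • |i⟩ ⊗ Fᵢ(δᵢ)ψ`, and `U_C ⊗ I` maps that back to `λ • |φᵢ⟩ ⊗ Fᵢ(δᵢ)ψ`.
-/

def pureTensorₗ : EuclideanSpace ℂ (Fin n) →ₗ[ℂ] H →ₗ[ℂ] TensorSp n H :=
  LinearMap.mk₂ ℂ pureTensor
    (fun c d ψ => by ext i; simp [pureTensor, add_smul])
    (fun a c ψ => by ext i; simp [pureTensor, smul_smul])
    (fun c ψ φ => by ext i; simp [pureTensor])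
    (fun a c ψ => by ext i; simp [pureTensor, smul_comm a])

lemma pureTensor_single_apply (i j : Fin n) (ψ : H) :
    pureTensor (EuclideanSpace.single i (1 : ℂ)) ψ j = Pi.single (M := fun _ => H) i ψ j := by
  by_cases h : j = i
  · subst h; simp [pureTensor]
  · simp [pureTensor, h]

lemma sum_pureTensor_single (x : TensorSp n H) :
    ∑ i, pureTensor (EuclideanSpace.single i (1 : ℂ)) (x i) = x := by
  ext j
  simp [pureTensor_single_apply]

lemma linearMap_ext_pureTensor {ι : Type*} (b : Module.Basis ι ℂ (EuclideanSpace ℂ (Fin n)))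
    {T S : TensorSp n H →ₗ[ℂ] TensorSp n H}
    (h : ∀ i ψ, T (pureTensor (b i) ψ) = S (pureTensor (b i) ψ)) : T = S := by
  have hbilin : pureTensorₗ.compr₂ T = pureTensorₗ.compr₂ S :=
    b.ext fun i => LinearMap.ext fun ψ => h i ψ
  ext x : 1
  rw [← sum_pureTensor_single x, map_sum, map_sum]
  exact Finset.sum_congr rfl fun i _ => LinearMap.congr_fun₂ hbilin _ _

lemma tensorLeft_pureTensor (A : EuclideanSpace ℂ (Fin n) →ₗ[ℂ] EuclideanSpace ℂ (Fin n))
    (c : EuclideanSpace ℂ (Fin n)) (ψ : H) :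
    tensorLeft A (pureTensor c ψ) = pureTensor (A c) ψ := by
  have hAc : A c = ∑ b, c b • A (EuclideanSpace.single b 1) := by
    conv_lhs => rw [← (EuclideanSpace.basisFun (Fin n) ℂ).sum_repr c]
    simp
  ext i
  simp [tensorLeft, tensorOp, pureTensor, hAc, Finset.sum_smul, smul_smul, mul_comm]

lemma guardedComp_pureTensor_single [FiniteDimensional ℂ H] {Δ : Fin n → Type*}
    [∀ k, Fintype (Δ k)] (F : ∀ k, Δ k → (H →ₗ[ℂ] H)) (δ : ∀ k, Δ k) (i : Fin n) (ψ : H) :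
    guardedComp F δ (pureTensor (EuclideanSpace.single i 1) ψ)
      = (∏ k ∈ Finset.univ.erase i, lam F k (δ k)) •
          pureTensor (EuclideanSpace.single i 1) (F i (δ i) ψ) := by
  ext j
  by_cases h : j = i
  · subst h; simp [guardedComp, pureTensor]
  · simp [guardedComp, pureTensor, h]

theorem guardedComp_change_of_basis_general {n : ℕ} {H : Type*} [NormedAddCommGroup H]
    [InnerProductSpace ℂ H] [FiniteDimensional ℂ H]
    {Δ : Fin n → Type*} [∀ k, Fintype (Δ k)] (F : ∀ k, Δ k → (H →ₗ[ℂ] H))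
    (UC : EuclideanSpace ℂ (Fin n) ≃ₗᵢ[ℂ] EuclideanSpace ℂ (Fin n))
    (W : (∀ k, Δ k) → (TensorSp n H →ₗ[ℂ] TensorSp n H))
    (hW : ∀ (δ : ∀ k, Δ k) (i : Fin n) (ψ : H),
      W δ (pureTensor (UC (EuclideanSpace.single i 1)) ψ)
        = (∏ k ∈ Finset.univ.erase i, lam F k (δ k)) •
            pureTensor (UC (EuclideanSpace.single i 1)) (F i (δ i) ψ)) :
    ∀ δ : (∀ k, Δ k),
      W δ = tensorLeft UC.toLinearEquiv.toLinearMap ∘ₗ guardedComp F δ ∘ₗ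
              tensorLeft UC.symm.toLinearEquiv.toLinearMap := by
  intro δ
  let φ := (EuclideanSpace.basisFun (Fin n) ℂ).map UC
  have hφ : ∀ i, φ i = UC (EuclideanSpace.single i 1) := fun i => by
    simp [φ, OrthonormalBasis.map_apply]
  refine linearMap_ext_pureTensor φ.toBasis fun i ψ => ?_
  simp only [OrthonormalBasis.coe_toBasis, hφ, LinearMap.comp_apply]
  rw [hW, tensorLeft_pureTensor]
  simp only [LinearEquiv.coe_coe, LinearIsometryEquiv.coe_toLinearEquiv,
    LinearIsometryEquiv.symm_apply_apply]
  rw [guardedComp_pureTensor_single, LinearMap.map_smul_of_tower, tensorLeft_pureTensor]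
  rfl

/-- change of coin basis for the guarded composition of operator-valued
functions: the composition along `{|φᵢ⟩ = U_C|i⟩}` (characterized by its action on the
pure tensors `|φᵢ⟩⊗ψ`) equals `(U_C ⊗ I) ∘ (composition along {|i⟩}) ∘ (U_C† ⊗ I)`. -/
theorem guardedComp_change_of_basis {n : ℕ} {H : Type*} [NormedAddCommGroup H]
    [InnerProductSpace ℂ H] [FiniteDimensional ℂ H]
    {Δ : Fin n → Type*} [∀ k, Fintype (Δ k)] (F : ∀ k, Δ k → (H →ₗ[ℂ] H))
    (hovf : ∀ k, Loewner (∑ δ : Δ k, LinearMap.adjoint (F k δ) ∘ₗ F k δ) LinearMap.id)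
    (UC : EuclideanSpace ℂ (Fin n) ≃ₗᵢ[ℂ] EuclideanSpace ℂ (Fin n))
    (W : (∀ k, Δ k) → (TensorSp n H →ₗ[ℂ] TensorSp n H))
    (hW : ∀ (δ : ∀ k, Δ k) (i : Fin n) (ψ : H),
      W δ (pureTensor (UC (EuclideanSpace.single i 1)) ψ)
        = (∏ k ∈ Finset.univ.erase i, lam F k (δ k)) •
            pureTensor (UC (EuclideanSpace.single i 1)) (F i (δ i) ψ)) :
    ∀ δ : (∀ k, Δ k),
      W δ = tensorLeft UC.toLinearEquiv.toLinearMap ∘ₗ guardedComp F δ ∘ₗ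
              tensorLeft UC.symm.toLinearEquiv.toLinearMap :=
  guardedComp_change_of_basis_general F UC W hW
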